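/- Let p be a nonnegative integer, α ∈ (p, p+1], and μ a probability measure in M_{p,α}. Then for any β ∈ [0, (α−p)/(α−p+1)), we have r_G(z) = o(z^{−β}) as z→∞ non-tangentially (fractional powers taken with the principal branch of the logarithm on the upper half-plane). -/

import Mathlib

open MeasureTheory Filter Topology
open scoped ENNReal

noncomputable section

/-- A function, positive on `(0,∞)`, is regularly varying at infinity with index `ρ`. -/
def RegVarying (f : ℝ → ℝ) (ρ : ℝ) : Prop :=
  (∀ x : ℝ, 0 < x → 0 < f x) ∧
    ∀ t : ℝ, 0 < t → Tendsto (fun x : ℝ => f (t * x) / f x) atTop (nhds (t ^ ρ))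

/-- `μ ∈ M_p`: a Borel probability measure on `[0,∞)` with finite `p`-th moment and
infinite `(p+1)`-th moment. -/
def MemMp (μ : Measure ℝ) (p : ℕ) : Prop :=
  IsProbabilityMeasure μ ∧ μ (Set.Iio 0) = 0 ∧
    (∫⁻ t, ENNReal.ofReal (t ^ p) ∂μ) ≠ ⊤ ∧ (∫⁻ t, ENNReal.ofReal (t ^ (p + 1)) ∂μ) = ⊤

/-- The remainder term in the Laurent series expansion of the Cauchy transform of `μ`:
`r_G(z) = ∫₀^∞ t^{p+1} (z − t)⁻¹ dμ(t)`. -/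
def rG (μ : Measure ℝ) (p : ℕ) (z : ℂ) : ℂ :=
  ∫ t : ℝ, (t : ℂ) ^ (p + 1) / (z - (t : ℂ)) ∂μ

/-! On the cone `|Re z| ≤ η Im z` one has `‖z‖ + t ≤ (2η + 3) ‖z - t‖` for `t ≥ 0`, and
`t ≤ (‖z‖ + t) ‖z‖^{-θ} t^θ` for `θ ∈ (0, 1]`. Hence `‖r_G(z)‖ ≤ (2η + 3) ‖z‖^{-θ} ∫ t^{p+θ} dμ`.
Regular variation of the tail with index `-α` gives `μ(x, ∞) = O(x^{-γ})` for every `γ < α`, so by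
the layer-cake formula the moment of order `p + θ` is finite once `p + θ < α`. Any
`θ ∈ (β, min (α - p) 1)` then gives `r_G(z) = O(‖z‖^{-θ}) = o(‖z‖^{-β})`. -/

lemma Antitone.le_mul_rpow_neg_of_doubling {f : ℝ → ℝ} {X γ : ℝ} (hf : Antitone f) (hX : 0 < X)
    (hγ : 0 ≤ γ) (hfX : 0 ≤ f X) (hdouble : ∀ x, X ≤ x → f (2 * x) ≤ 2 ^ (-γ) * f x) :
    ∀ x, X ≤ x → f x ≤ f X * (2 * X) ^ γ * x ^ (-γ) := by
  have hiter : ∀ n : ℕ, f (X * 2 ^ n) ≤ ((2 : ℝ) ^ (-γ)) ^ n * f X := by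
    intro n
    induction n with
    | zero => simp
    | succ n ih =>
      calc f (X * 2 ^ (n + 1)) = f (2 * (X * 2 ^ n)) := by ring_nf
        _ ≤ 2 ^ (-γ) * f (X * 2 ^ n) :=
          hdouble _ (le_mul_of_one_le_right hX.le (one_le_pow₀ one_le_two))
        _ ≤ 2 ^ (-γ) * (((2 : ℝ) ^ (-γ)) ^ n * f X) := by gcongr
        _ = ((2 : ℝ) ^ (-γ)) ^ (n + 1) * f X := by ring
  intro x hx
  have hx0 : 0 < x := hX.trans_le hx
  obtain ⟨n, hn, hn'⟩ := exists_nat_pow_near ((one_le_div hX).2 hx) one_lt_two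
  have hxn : x / (2 * X) < 2 ^ n := by
    rw [div_lt_iff₀ (by positivity)]
    rw [div_lt_iff₀ hX, pow_succ] at hn'
    linarith
  calc f x ≤ f (X * 2 ^ n) := hf (by rwa [le_div_iff₀' hX] at hn)
    _ ≤ ((2 : ℝ) ^ n) ^ (-γ) * f X := by
      rw [← Real.rpow_pow_comm zero_le_two]; exact hiter n
    _ ≤ (x / (2 * X)) ^ (-γ) * f X := by
      gcongr ?_ * _
      exact Real.rpow_le_rpow_of_nonpos (by positivity) hxn.le (neg_nonpos.2 hγ)
    _ = f X * (2 * X) ^ γ * x ^ (-γ) := by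
      rw [Real.div_rpow hx0.le (by positivity), Real.rpow_neg (by positivity : (0:ℝ) ≤ 2 * X)]
      field_simp

lemma RegVarying.le_mul_rpow_neg {f : ℝ → ℝ} {α γ : ℝ} (hf : RegVarying f (-α)) (hanti : Antitone f)
    (hγα : γ < α) (hγ : 0 ≤ γ) : ∃ C X : ℝ, 0 < X ∧ ∀ x, X ≤ x → f x ≤ C * x ^ (-γ) := by
  have hlt : (2 : ℝ) ^ (-α) < 2 ^ (-γ) := Real.rpow_lt_rpow_of_exponent_lt one_lt_two (by linarith)
  obtain ⟨X₀, hX₀⟩ := ((hf.2 2 two_pos).eventually_lt_const hlt).exists_forall_of_atTop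
  set X := max X₀ 1
  have hX : 0 < X := zero_lt_one.trans_le (le_max_right _ _)
  refine ⟨f X * (2 * X) ^ γ, X, hX, hanti.le_mul_rpow_neg_of_doubling hX hγ (hf.1 X hX).le ?_⟩
  intro x hx
  have hfx := hf.1 x (hX.trans_le hx)
  have := hX₀ x ((le_max_left _ _).trans hx)
  rw [div_lt_iff₀ hfx] at this
  exact this.le

open Set in
lemma lintegral_rpow_ne_top_of_tail_le (μ : Measure ℝ) [IsFiniteMeasure μ] (hμ : μ (Iio 0) = 0)
    {q γ C X : ℝ} (hq : 0 < q) (hqγ : q < γ) (hX : 0 < X)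
    (htail : ∀ x, X ≤ x → μ (Ioi x) ≤ ENNReal.ofReal (C * x ^ (-γ))) :
    ∫⁻ t, ENNReal.ofReal (t ^ q) ∂μ ≠ ⊤ := by
  have hnonneg : 0 ≤ᵐ[μ] fun t => t := by
    simp only [Filter.EventuallyLE, ae_iff, Pi.zero_apply, not_le]
    exact hμ
  rw [lintegral_rpow_eq_lintegral_meas_lt_mul μ hnonneg aemeasurable_id hq]
  refine ENNReal.mul_ne_top ENNReal.ofReal_ne_top (ne_top_of_le_ne_top ?_
    ((lintegral_union_le _ _ _).trans_eq' (by rw [Ioc_union_Ioi_eq_Ioi hX.le])))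
  have hsmall : IntegrableOn (fun s : ℝ => s ^ (q - 1)) (Ioc 0 X) :=
    (intervalIntegrable_iff_integrableOn_Ioc_of_le hX.le).1
      (intervalIntegral.intervalIntegrable_rpow' (by linarith))
  have hlarge : IntegrableOn (fun s : ℝ => C * s ^ (q - 1 - γ)) (Ioi X) :=
    (integrableOn_Ioi_rpow_of_lt (by linarith) hX).const_mul C
  refine ENNReal.add_ne_top.2 ⟨ne_top_of_le_ne_top (ENNReal.mul_ne_top (measure_ne_top μ univ)
    hsmall.lintegral_lt_top.ne) ?_, ne_top_of_le_ne_top hlarge.lintegral_lt_top.ne ?_⟩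
  · rw [← lintegral_const_mul' _ _ (measure_ne_top μ univ)]
    exact setLIntegral_mono' measurableSet_Ioc fun s _ => by gcongr; exact subset_univ _
  · refine setLIntegral_mono' measurableSet_Ioi fun s hs => ?_
    have hs0 : 0 < s := hX.trans hs
    calc μ {t | s < t} * ENNReal.ofReal (s ^ (q - 1))
        ≤ ENNReal.ofReal (C * s ^ (-γ)) * ENNReal.ofReal (s ^ (q - 1)) := by
          gcongr; exact htail s hs.le
      _ = ENNReal.ofReal (C * s ^ (q - 1 - γ)) := by
          rw [← ENNReal.ofReal_mul' (by positivity), mul_assoc, ← Real.rpow_add hs0]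
          ring_nf

lemma norm_add_le_mul_norm_sub_ofReal {z : ℂ} {η t : ℝ} (him : 0 < z.im)
    (hre : |z.re| ≤ η * z.im) (ht : 0 ≤ t) : ‖z‖ + t ≤ (2 * η + 3) * ‖z - t‖ := by
  have hη : 0 ≤ η := nonneg_of_mul_nonneg_left ((abs_nonneg _).trans hre) him
  have him_le : z.im ≤ ‖z - t‖ := by simpa using Complex.im_le_norm (z - t)
  have hz : ‖z‖ ≤ (η + 1) * ‖z - t‖ :=
    calc ‖z‖ ≤ |z.re| + |z.im| := Complex.norm_le_abs_re_add_abs_im z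
      _ ≤ (η + 1) * z.im := by rw [abs_of_pos him]; linarith
      _ ≤ (η + 1) * ‖z - t‖ := by gcongr
  have htz : t ≤ ‖z‖ + ‖z - t‖ := by
    simpa [abs_of_nonneg ht] using norm_sub_le z (z - t)
  linarith

lemma le_add_mul_rpow {t R θ : ℝ} (ht : 0 ≤ t) (hR : 0 < R) (hθ0 : 0 ≤ θ) (hθ1 : θ ≤ 1) :
    t ≤ (R + t) * R ^ (-θ) * t ^ θ := by
  rcases ht.eq_or_lt with rfl | ht
  · positivity
  calc t = t ^ (1 - θ) * t ^ θ := by rw [← Real.rpow_add ht, sub_add_cancel, Real.rpow_one]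
    _ ≤ (R + t) ^ (1 - θ) * t ^ θ := by gcongr; linarith
    _ = (R + t) * (R + t) ^ (-θ) * t ^ θ := by
      rw [sub_eq_add_neg, Real.rpow_add (by linarith), Real.rpow_one]
    _ ≤ (R + t) * R ^ (-θ) * t ^ θ := by
      gcongr (R + t) * ?_ * _
      exact Real.rpow_le_rpow_of_nonpos hR (by linarith) (by linarith)

lemma norm_pow_succ_div_sub_le {z : ℂ} {η θ t : ℝ} (him : 0 < z.im) (hre : |z.re| ≤ η * z.im)
    (hθ0 : 0 < θ) (hθ1 : θ ≤ 1) (ht : 0 ≤ t) (p : ℕ) :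
    ‖(t : ℂ) ^ (p + 1) / (z - t)‖ ≤ (2 * η + 3) * ‖z‖ ^ (-θ) * t ^ ((p : ℝ) + θ) := by
  have hz : 0 < ‖z‖ := norm_pos_iff.2 fun h => by simp [h] at him
  have hzt : 0 < ‖z - t‖ := him.trans_le (by simpa using Complex.im_le_norm (z - t))
  rw [norm_div, norm_pow, Complex.norm_real, Real.norm_of_nonneg ht, div_le_iff₀ hzt,
    Real.rpow_add' ht (by positivity), Real.rpow_natCast]
  calc t ^ (p + 1) = t ^ p * t := pow_succ t p
    _ ≤ t ^ p * ((‖z‖ + t) * ‖z‖ ^ (-θ) * t ^ θ) := by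
      gcongr; exact le_add_mul_rpow ht hz hθ0.le hθ1
    _ ≤ t ^ p * ((2 * η + 3) * ‖z - t‖ * ‖z‖ ^ (-θ) * t ^ θ) := by
      gcongr; exact norm_add_le_mul_norm_sub_ofReal him hre ht
    _ = (2 * η + 3) * ‖z‖ ^ (-θ) * (t ^ p * t ^ θ) * ‖z - t‖ := by ring

lemma norm_rG_le {μ : Measure ℝ} (hμ : μ (Set.Iio 0) = 0) (p : ℕ) {z : ℂ} {η θ : ℝ}
    (him : 0 < z.im) (hre : |z.re| ≤ η * z.im) (hθ0 : 0 < θ) (hθ1 : θ ≤ 1)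
    (hmom : ∫⁻ t, ENNReal.ofReal (t ^ ((p : ℝ) + θ)) ∂μ ≠ ⊤) :
    ‖rG μ p z‖ ≤
      (2 * η + 3) * (∫⁻ t, ENNReal.ofReal (t ^ ((p : ℝ) + θ)) ∂μ).toReal * ‖z‖ ^ (-θ) := by
  have hη : 0 ≤ η := nonneg_of_mul_nonneg_left ((abs_nonneg _).trans hre) him
  have hnonneg : ∀ᵐ t ∂μ, 0 ≤ t := by
    simp only [ae_iff, not_le]
    exact hμ
  calc ‖rG μ p z‖
      ≤ (∫⁻ t, ENNReal.ofReal ‖(t : ℂ) ^ (p + 1) / (z - t)‖ ∂μ).toReal :=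
        norm_integral_le_lintegral_norm _
    _ ≤ (ENNReal.ofReal ((2 * η + 3) * ‖z‖ ^ (-θ)) *
          ∫⁻ t, ENNReal.ofReal (t ^ ((p : ℝ) + θ)) ∂μ).toReal := by
        refine ENNReal.toReal_mono (ENNReal.mul_ne_top ENNReal.ofReal_ne_top hmom) ?_
        rw [← lintegral_const_mul' _ _ ENNReal.ofReal_ne_top]
        refine lintegral_mono_ae (hnonneg.mono fun t ht => ?_)
        rw [← ENNReal.ofReal_mul (by positivity)]
        exact ENNReal.ofReal_le_ofReal (norm_pow_succ_div_sub_le him hre hθ0 hθ1 ht p)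
    _ = _ := by
        rw [ENNReal.toReal_mul, ENNReal.toReal_ofReal (by positivity)]
        ring

lemma exists_mul_rpow_neg_le (A : ℝ) {ε β θ : ℝ} (hε : 0 < ε) (hβθ : β < θ) :
    ∃ M : ℝ, 0 < M ∧ ∀ R, M < R → A * R ^ (-θ) ≤ ε * R ^ (-β) := by
  have hlim : Tendsto (fun R : ℝ => A * R ^ (-(θ - β))) atTop (𝓝 0) := by
    simpa using (tendsto_rpow_neg_atTop (sub_pos.2 hβθ)).const_mul A
  obtain ⟨N, hN⟩ :=
    ((hlim.eventually_le_const hε).and (eventually_gt_atTop 0)).exists_forall_of_atTop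
  refine ⟨max N 1, by positivity, fun R hR => ?_⟩
  obtain ⟨hle, hR0⟩ := hN R ((le_max_left _ _).trans hR.le)
  calc A * R ^ (-θ) = A * R ^ (-(θ - β)) * R ^ (-β) := by
        rw [mul_assoc, ← Real.rpow_add hR0]; ring_nf
    _ ≤ ε * R ^ (-β) := by gcongr

theorem stmt16_general (μ : Measure ℝ) (p : ℕ) (α β : ℝ)
    (hμ : MemMp μ p)
    (hrv : RegVarying (fun y : ℝ => (μ (Set.Ioi y)).toReal) (-α))
    (hα1 : (p : ℝ) < α)
    (hβ : β < (α - p) / (α - p + 1)) :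
    ∀ η : ℝ, 0 < η → ∀ ε : ℝ, 0 < ε → ∃ M : ℝ, 0 < M ∧
      ∀ z : ℂ, 0 < z.im → |z.re| < η * z.im → M < ‖z‖ →
        ‖rG μ p z‖ ≤ ε * ‖z ^ (-(β : ℂ))‖ := by
  intro η _ ε hε
  obtain ⟨_, hneg, -, -⟩ := hμ
  have hs : 0 < α - p := sub_pos.2 hα1
  have hβs : β < min (α - p) 1 := lt_min
    (hβ.trans_le (div_le_self hs.le (by linarith)))
    (hβ.trans ((div_lt_one (by linarith)).2 (by linarith)))
  obtain ⟨θ, hθβ, hθs⟩ := exists_between (max_lt hβs (lt_min hs one_pos))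
  rw [max_lt_iff] at hθβ
  rw [lt_min_iff] at hθs
  have hq : 0 < (p : ℝ) + θ := add_pos_of_nonneg_of_pos p.cast_nonneg hθβ.2
  obtain ⟨γ, hqγ, hγα⟩ := exists_between (show (p : ℝ) + θ < α by linarith)
  have htail_anti : Antitone fun y : ℝ => (μ (Set.Ioi y)).toReal := fun x y hxy =>
    ENNReal.toReal_mono (measure_ne_top μ _) (measure_mono (Set.Ioi_subset_Ioi hxy))
  obtain ⟨C, X, hX, htail⟩ := hrv.le_mul_rpow_neg htail_anti hγα (by linarith)
  have hmom := lintegral_rpow_ne_top_of_tail_le μ hneg hq hqγ hX fun x hx =>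
    (ENNReal.ofReal_toReal (measure_ne_top μ _)).symm.trans_le
      (ENNReal.ofReal_le_ofReal (htail x hx))
  obtain ⟨M, hM, hMR⟩ := exists_mul_rpow_neg_le
    ((2 * η + 3) * (∫⁻ t, ENNReal.ofReal (t ^ ((p : ℝ) + θ)) ∂μ).toReal) hε hθβ.1
  refine ⟨M, hM, fun z him hre hzM => ?_⟩
  rw [← Complex.ofReal_neg, Complex.norm_cpow_real]
  exact (norm_rG_le hneg p him hre.le hθβ.2 hθs.2.le hmom).trans (hMR _ hzM)

/-- Proposition (upper bound for `r_G`): if `μ ∈ M_{p,α}` with `α ∈ (p, p+1]`, then for any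
`β ∈ [0, (α−p)/(α−p+1))` one has `r_G(z) = o(z^{−β})` as `z → ∞` non-tangentially
(principal branch powers). -/
theorem stmt16 (μ : Measure ℝ) (p : ℕ) (α β : ℝ)
    (hμ : MemMp μ p)
    (hrv : RegVarying (fun y : ℝ => (μ (Set.Ioi y)).toReal) (-α))
    (hα1 : (p : ℝ) < α) (hα2 : α ≤ (p : ℝ) + 1)
    (hβ0 : 0 ≤ β) (hβ : β < (α - p) / (α - p + 1)) :
    ∀ η : ℝ, 0 < η → ∀ ε : ℝ, 0 < ε → ∃ M : ℝ, 0 < M ∧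
      ∀ z : ℂ, 0 < z.im → |z.re| < η * z.im → M < ‖z‖ →
        ‖rG μ p z‖ ≤ ε * ‖z ^ (-(β : ℂ))‖ :=
  stmt16_general μ p α β hμ hrv hα1 hβ
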